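/- For s = 0,…,3^k−1, the assignment x ↦ [[0,ζ₃²],[−ζ₃,0]], y ↦ [[ζ₃²,1],[ζ₃²,−ζ₃²]], z ↦ ζ_{3^k}^s·[[0,ζ₃],[−ζ₃²,−1]] extends to a group homomorphism ϱ_s : P'_{8·3^k} → GL(2,ℂ), i.e., the matrices satisfy the relations X² = (XY)² = Y², ZXZ⁻¹ = Y, ZYZ⁻¹ = XY, Z^{3^k} = I. -/

import Mathlib

noncomputable section

open Matrix

/-- ζ_n = e^{2πi/n}. -/
def zeta (n : ℕ) : ℂ := Complex.exp (2 * Real.pi * Complex.I / n)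

/-- ϱ_s(x). -/
def Xm : Matrix (Fin 2) (Fin 2) ℂ := !![0, zeta 3 ^ 2; -zeta 3, 0]

/-- ϱ_s(y). -/
def Ym : Matrix (Fin 2) (Fin 2) ℂ := !![zeta 3 ^ 2, 1; zeta 3 ^ 2, -(zeta 3 ^ 2)]

/-- ϱ_s(z). -/
def Zm (k s : ℕ) : Matrix (Fin 2) (Fin 2) ℂ :=
  zeta (3 ^ k) ^ s • !![0, zeta 3; -(zeta 3 ^ 2), -1]

/-!
Write `ω = ζ₃` and `Z = c • M` with the scalar `c = ζ_{3^k}^s`. The relations other than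
`Z^{3^k} = 1` do not see `c`, and entrywise they are polynomial identities in `ω` modulo
`ω² + ω + 1`, so they hold for any root of that polynomial in any commutative ring; in fact
`X² = Y² = (XY)² = -1`. Finally `M³ = 1` and `c^{3^k} = 1`, so `Z^{3^k} = 1` once `3 ∣ 3^k`.
-/

namespace Matrix

variable {α : Type*}

theorem fin_two_eq_iff {a b c d a' b' c' d' : α} :
    !![a, b; c, d] = !![a', b'; c', d'] ↔ a = a' ∧ b = b' ∧ c = c' ∧ d = d' := by
  simp only [EmbeddingLike.apply_eq_iff_eq, vecCons_inj, and_true, and_assoc]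

theorem neg_one_fin_two [One α] [NegZeroClass α] :
    (-1 : Matrix (Fin 2) (Fin 2) α) = !![-1, 0; 0, -1] := by
  rw [one_fin_two, neg_of]
  simp only [neg_cons, neg_empty, neg_zero]

end Matrix

section

variable {R : Type*} [CommRing R] {ω : R}

def xMat (ω : R) : Matrix (Fin 2) (Fin 2) R := !![0, ω ^ 2; -ω, 0]

def yMat (ω : R) : Matrix (Fin 2) (Fin 2) R := !![ω ^ 2, 1; ω ^ 2, -(ω ^ 2)]

def zMat (ω : R) : Matrix (Fin 2) (Fin 2) R := !![0, ω; -(ω ^ 2), -1]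

theorem xMat_sq (hω : ω ^ 2 + ω + 1 = 0) : xMat ω ^ 2 = -1 := by
  rw [xMat, sq, mul_fin_two, neg_one_fin_two, fin_two_eq_iff]
  grind

theorem yMat_sq (hω : ω ^ 2 + ω + 1 = 0) : yMat ω ^ 2 = -1 := by
  rw [yMat, sq, mul_fin_two, neg_one_fin_two, fin_two_eq_iff]
  grind

theorem xMat_mul_yMat_sq (hω : ω ^ 2 + ω + 1 = 0) : (xMat ω * yMat ω) ^ 2 = -1 := by
  rw [xMat, yMat, mul_fin_two, sq, mul_fin_two, neg_one_fin_two, fin_two_eq_iff]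
  grind

theorem zMat_mul_xMat (hω : ω ^ 2 + ω + 1 = 0) : zMat ω * xMat ω = yMat ω * zMat ω := by
  rw [xMat, yMat, zMat, mul_fin_two, mul_fin_two, fin_two_eq_iff]
  grind

theorem zMat_mul_yMat (hω : ω ^ 2 + ω + 1 = 0) :
    zMat ω * yMat ω = xMat ω * yMat ω * zMat ω := by
  rw [xMat, yMat, zMat, mul_fin_two, mul_fin_two, mul_fin_two, fin_two_eq_iff]
  grind

theorem zMat_pow_three (hω : ω ^ 2 + ω + 1 = 0) : zMat ω ^ 3 = 1 := by
  rw [zMat, pow_three, mul_fin_two, mul_fin_two, one_fin_two, fin_two_eq_iff]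
  grind

end

theorem zeta_isPrimitiveRoot {n : ℕ} (hn : n ≠ 0) : IsPrimitiveRoot (zeta n) n :=
  Complex.isPrimitiveRoot_exp n hn

theorem zeta_three_sq_add_self_add_one : zeta 3 ^ 2 + zeta 3 + 1 = 0 := by
  have h := (zeta_isPrimitiveRoot three_ne_zero).geom_sum_eq_zero (by norm_num)
  simp only [Finset.sum_range_succ, Finset.sum_range_zero] at h
  linear_combination h

theorem Xm_eq : Xm = xMat (zeta 3) := rfl

theorem Ym_eq : Ym = yMat (zeta 3) := rfl

theorem Zm_eq (k s : ℕ) : Zm k s = zeta (3 ^ k) ^ s • zMat (zeta 3) := rfl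

theorem Zm_pow_three_pow {k : ℕ} (hk : 1 ≤ k) (s : ℕ) : Zm k s ^ 3 ^ k = 1 := by
  have hc : (zeta (3 ^ k) ^ s) ^ 3 ^ k = 1 := by
    rw [← pow_mul, mul_comm, pow_mul, (zeta_isPrimitiveRoot (by positivity)).pow_eq_one, one_pow]
  obtain ⟨j, hj⟩ : 3 ∣ 3 ^ k := dvd_pow_self 3 (by omega)
  rw [Zm_eq, smul_pow, hc, one_smul, hj, pow_mul, zMat_pow_three zeta_three_sq_add_self_add_one,
    one_pow]

theorem Zm_mul_Xm (k s : ℕ) : Zm k s * Xm = Ym * Zm k s := by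
  rw [Zm_eq, Xm_eq, Ym_eq, smul_mul_assoc, mul_smul_comm,
    zMat_mul_xMat zeta_three_sq_add_self_add_one]

theorem Zm_mul_Ym (k s : ℕ) : Zm k s * Ym = Xm * Ym * Zm k s := by
  rw [Zm_eq, Xm_eq, Ym_eq, smul_mul_assoc, mul_smul_comm,
    zMat_mul_yMat zeta_three_sq_add_self_add_one]

theorem stmt11_general (k s : ℕ) (hk : 2 ≤ k) :
    Xm ^ 2 = (Xm * Ym) ^ 2 ∧ (Xm * Ym) ^ 2 = Ym ^ 2 ∧
    Zm k s * Xm * (Zm k s)⁻¹ = Ym ∧ Zm k s * Ym * (Zm k s)⁻¹ = Xm * Ym ∧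
    Zm k s ^ 3 ^ k = 1 := by
  have hω := zeta_three_sq_add_self_add_one
  have hpow : Zm k s ^ 3 ^ k = 1 := Zm_pow_three_pow (by omega) s
  have hdet : IsUnit (Zm k s).det :=
    (isUnit_iff_isUnit_det _).1 (.of_pow_eq_one hpow (by positivity))
  refine ⟨?_, ?_, ?_, ?_, hpow⟩
  · rw [Xm_eq, Ym_eq, xMat_sq hω, xMat_mul_yMat_sq hω]
  · rw [Xm_eq, Ym_eq, yMat_sq hω, xMat_mul_yMat_sq hω]
  · rw [Zm_mul_Xm, mul_nonsing_inv_cancel_right _ _ hdet]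
  · rw [Zm_mul_Ym, mul_nonsing_inv_cancel_right _ _ hdet]

/-- The matrices defining ϱ_s satisfy the relations of P'_{8·3^k}. -/
theorem stmt11 (k s : ℕ) (hk : 2 ≤ k) (hs : s < 3 ^ k) :
    Xm ^ 2 = (Xm * Ym) ^ 2 ∧ (Xm * Ym) ^ 2 = Ym ^ 2 ∧
    Zm k s * Xm * (Zm k s)⁻¹ = Ym ∧ Zm k s * Ym * (Zm k s)⁻¹ = Xm * Ym ∧
    Zm k s ^ 3 ^ k = 1 :=
  stmt11_general k s hk
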